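/- arXiv:2505.17297 — 2 statements merged into one kernel-verified Lean document; each statement's English description precedes it below -/
import Mathlib

section
/- Order intervals in ℓ¹ are norm compact: for every u ≥ 0 in ℓ¹, the set [−u, u] = {x ∈ ℓ¹ : −u ≤ x ≤ u} is compact in the ℓ¹ norm. -/
set_option maxHeartbeats 800000

open Filter Topology

/-- Order intervals in `ℓ¹` are norm compact: for every `u ≥ 0` in `ℓ¹` (coordinatewise),
the order interval `[-u, u]` is compact in the `ℓ¹` norm. -/
theorem stmt_14 (u : lp (fun _ : ℕ => ℝ) 1) (hu : ∀ n : ℕ, 0 ≤ u n) :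
    IsCompact {x : lp (fun _ : ℕ => ℝ) 1 | ∀ n : ℕ, -u n ≤ x n ∧ x n ≤ u n} := by
  classical
  have hp : (0:ℝ) < (1 : ENNReal).toReal := by norm_num
  -- norm formula on ℓ¹
  have hnorm : ∀ f : lp (fun _ : ℕ => ℝ) 1, HasSum (fun n => |f n|) ‖f‖ := by
    intro f
    have := lp.hasSum_norm hp f
    simpa [Real.norm_eq_abs] using this
  -- summability of the coordinates of u
  have husum : Summable (fun n => u n) := by
    have h := (hnorm u).summable
    have : ∀ n, |u n| = u n := fun n => abs_of_nonneg (hu n)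
    simpa [this] using h
  set K : Set (ℕ → ℝ) := Set.univ.pi (fun n => Set.Icc (-(u n)) (u n)) with hK
  have hKcompact : IsCompact K := isCompact_univ_pi fun n => isCompact_Icc
  have habs : ∀ g ∈ K, ∀ n, |g n| ≤ u n := by
    intro g hg n
    have := hg n (Set.mem_univ n)
    exact abs_le.2 ⟨this.1, this.2⟩
  have hmem : ∀ g ∈ K, Memℓp g 1 := by
    intro g hg
    apply memℓp_gen
    simp only [ENNReal.toReal_one, Real.rpow_one, Real.norm_eq_abs]
    exact Summable.of_nonneg_of_le (fun n => abs_nonneg _) (habs g hg) husum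
  set Φ : (ℕ → ℝ) → lp (fun _ : ℕ => ℝ) 1 :=
    fun g => if h : Memℓp g 1 then ⟨g, h⟩ else 0 with hΦ
  have hΦcoe : ∀ g ∈ K, ∀ n, (Φ g) n = g n := by
    intro g hg n
    simp [hΦ, dif_pos (hmem g hg)]
  -- the set is the image of K
  have himg : {x : lp (fun _ : ℕ => ℝ) 1 | ∀ n : ℕ, -u n ≤ x n ∧ x n ≤ u n} = Φ '' K := by
    ext x
    constructor
    · intro hx
      refine ⟨(x : ℕ → ℝ), fun n _ => ⟨(hx n).1, (hx n).2⟩, ?_⟩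
      simp only [hΦ, dif_pos (lp.memℓp x)]
    · rintro ⟨g, hg, rfl⟩
      intro n
      rw [hΦcoe g hg n]
      exact ⟨(hg n (Set.mem_univ n)).1, (hg n (Set.mem_univ n)).2⟩
  rw [himg]
  refine hKcompact.image_of_continuousOn ?_
  -- continuity of Φ on K
  intro g hg
  rw [ContinuousWithinAt, Metric.tendsto_nhds]
  intro ε hε
  -- choose N with tail of u small
  obtain ⟨N, hN⟩ : ∃ N, ∑' k, u (k + N) < ε / 8 :=
    ((tendsto_sum_nat_add (fun n => u n)).eventually
      (gt_mem_nhds (show (0:ℝ) < ε/8 by linarith))).exists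
  set δ : ℝ := ε / (4 * (N + 1)) with hδ
  have hδpos : 0 < δ := by positivity
  -- the neighborhood in the product topology
  have hV : (Set.pi (↑(Finset.range N) : Set ℕ) (fun n => Metric.ball (g n) δ)) ∈ 𝓝 g := by
    apply set_pi_mem_nhds (Finset.finite_toSet _)
    intro n _
    exact Metric.ball_mem_nhds _ hδpos
  filter_upwards [mem_nhdsWithin_of_mem_nhds hV, self_mem_nhdsWithin] with g' hg' hg'K
  -- estimate the distance
  have hsub : Summable (fun n => |g' n - g n|) := by
    refine Summable.of_nonneg_of_le (fun n => abs_nonneg _) (fun n => ?_) (husum.add husum)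
    calc |g' n - g n| ≤ |g' n| + |g n| := abs_sub _ _
      _ ≤ u n + u n := add_le_add (habs g' hg'K n) (habs g hg n)
  have hdist : dist (Φ g') (Φ g) = ∑' n, |g' n - g n| := by
    rw [dist_eq_norm, ← (hnorm (Φ g' - Φ g)).tsum_eq]
    refine tsum_congr fun n => ?_
    rw [lp.coeFn_sub, Pi.sub_apply, hΦcoe g' hg'K n, hΦcoe g hg n]
  rw [hdist]
  have hsplit : ∑' n, |g' n - g n|
      = (∑ n ∈ Finset.range N, |g' n - g n|) + ∑' k, |g' (k + N) - g (k + N)| :=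
    (Summable.sum_add_tsum_nat_add N hsub).symm
  have h1 : ∑ n ∈ Finset.range N, |g' n - g n| ≤ N * δ := by
    calc ∑ n ∈ Finset.range N, |g' n - g n|
        ≤ ∑ n ∈ Finset.range N, δ := by
          refine Finset.sum_le_sum fun n hn => ?_
          have := hg' n (by exact_mod_cast hn)
          rw [Metric.mem_ball, Real.dist_eq] at this
          exact le_of_lt this
      _ = N * δ := by simp [mul_comm]
  have hNδ : (N : ℝ) * δ ≤ ε / 4 := by
    rw [hδ, mul_div_assoc', div_le_div_iff₀ (by positivity) (by norm_num)]
    nlinarith [(Nat.cast_nonneg N : (0:ℝ) ≤ N)]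
  have h2 : ∑' k, |g' (k + N) - g (k + N)| ≤ 2 * ∑' k, u (k + N) := by
    have hsum2 : Summable (fun k => 2 * u (k + N)) :=
      ((summable_nat_add_iff N).2 husum).mul_left 2
    calc ∑' k, |g' (k + N) - g (k + N)| ≤ ∑' k, 2 * u (k + N) := by
          refine Summable.tsum_le_tsum (fun k => ?_) ((summable_nat_add_iff N).2 hsub) hsum2
          calc |g' (k+N) - g (k+N)| ≤ |g' (k+N)| + |g (k+N)| := abs_sub _ _
            _ ≤ u (k+N) + u (k+N) := add_le_add (habs g' hg'K _) (habs g hg _)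
            _ = 2 * u (k+N) := by ring
      _ = 2 * ∑' k, u (k + N) := tsum_mul_left
  rw [hsplit]
  calc (∑ n ∈ Finset.range N, |g' n - g n|) + ∑' k, |g' (k + N) - g (k + N)|
      ≤ N * δ + 2 * ∑' k, u (k + N) := add_le_add h1 h2
    _ < ε / 4 + 2 * (ε / 8) := by
        refine add_lt_add_of_le_of_lt hNδ ?_
        linarith
    _ ≤ ε := by linarith
end

section
/- The order interval [−𝟙, 𝟙] in ℓ∞, where 𝟙 = (1,1,1,…), is not a Dunford-Pettis subset of ℓ∞. -/
open Filter Topology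

/-- A sequence is weakly null if every continuous linear functional sends it to a null
sequence. -/
def WeaklyNull {X : Type*} [NormedAddCommGroup X] [NormedSpace ℝ X] (s : ℕ → X) : Prop :=
  ∀ f : X →L[ℝ] ℝ, Tendsto (fun n => f (s n)) atTop (𝓝 0)

/-- A bounded set `A` in a Banach space `X` is a Dunford–Pettis set if every weakly null
sequence in `X*` converges to `0` uniformly on `A`. -/
def DPSet {X : Type*} [NormedAddCommGroup X] [NormedSpace ℝ X] (A : Set X) : Prop :=
  ∀ f : ℕ → X →L[ℝ] ℝ, WeaklyNull f →
    ∀ ε : ℝ, 0 < ε → ∀ᶠ n in atTop, ∀ a ∈ A, |f n a| ≤ ε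

section Aux
open Finset

set_option synthInstance.maxHeartbeats 1000000
set_option maxHeartbeats 1000000

noncomputable section

namespace DP17

def U : Ultrafilter ℕ := Ultrafilter.of atTop

lemma U_le_atTop : (U : Filter ℕ) ≤ atTop := Ultrafilter.of_le _

def sgn (n k : ℕ) : ℝ := if Nat.testBit k n then -1 else 1

lemma abs_sgn (n k : ℕ) : |sgn n k| = 1 := by
  unfold sgn; split <;> simp

lemma sgn_sq (n k : ℕ) : sgn n k * sgn n k = 1 := by
  unfold sgn; split <;> norm_num

lemma sgn_xor_self (n k : ℕ) : sgn n (k ^^^ 2 ^ n) = - sgn n k := by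
  unfold sgn
  rw [Nat.testBit_xor, Nat.testBit_two_pow]
  rcases h : Nat.testBit k n <;> simp [h]

lemma sgn_xor_other {n m : ℕ} (hnm : n ≠ m) (k : ℕ) :
    sgn m (k ^^^ 2 ^ n) = sgn m k := by
  unfold sgn
  rw [Nat.testBit_xor, Nat.testBit_two_pow]
  simp [hnm]

lemma sgn_orth {n m M : ℕ} (hn : n < M) (hnm : n ≠ m) :
    ∑ k ∈ range (2 ^ M), sgn n k * sgn m k = 0 := by
  have hmem : ∀ k ∈ range (2 ^ M), k ^^^ 2 ^ n ∈ range (2 ^ M) := by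
    intro k hk
    rw [mem_range] at hk ⊢
    exact Nat.xor_lt_two_pow hk (Nat.pow_lt_pow_right one_lt_two hn)
  refine Finset.sum_involution (fun k _ => k ^^^ 2 ^ n) ?_ ?_ hmem ?_
  · intro k _
    rw [sgn_xor_self, sgn_xor_other hnm]
    ring
  · intro k _ _ h
    have h0 : k ^^^ (k ^^^ 2 ^ n) = k ^^^ k := by rw [h]
    rw [xor_cancel_left, Nat.xor_self] at h0
    exact absurd h0 (by positivity)
  · intro k _
    exact xor_cancel_right _ _

end DP17

namespace DP17

def limU (u : ℕ → ℝ) : ℝ := limUnder (U : Filter ℕ) u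

lemma tendsto_limU {u : ℕ → ℝ} {C : ℝ} (h : ∀ M, |u M| ≤ C) :
    Tendsto u (U : Filter ℕ) (𝓝 (limU u)) := by
  obtain ⟨c, -, hc⟩ := (isCompact_Icc (a := -C) (b := C)).ultrafilter_le_nhds (U.map u)
    (by
      rw [Ultrafilter.coe_map, Filter.le_principal_iff, Filter.mem_map]
      exact Filter.univ_mem' fun M => Set.mem_Icc.mpr (abs_le.mp (h M)))
  rw [Ultrafilter.coe_map] at hc
  have ht : Tendsto u (U : Filter ℕ) (𝓝 c) := hc
  rw [limU, ht.limUnder_eq]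
  exact ht

lemma abs_limU_le {u : ℕ → ℝ} {C B : ℝ} (h : ∀ M, |u M| ≤ C)
    (hB : ∀ᶠ M in atTop, |u M| ≤ B) : |limU u| ≤ B := by
  have ht := (tendsto_limU h).abs
  exact le_of_tendsto ht (U_le_atTop hB)

def avg (h a : ℕ → ℝ) (M : ℕ) : ℝ := (2 ^ M : ℝ)⁻¹ * ∑ k ∈ range (2 ^ M), h k * a k

lemma abs_avg_le {h a : ℕ → ℝ} {Ch Ca : ℝ} (hh : ∀ k, |h k| ≤ Ch) (ha : ∀ k, |a k| ≤ Ca)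
    (M : ℕ) : |avg h a M| ≤ Ch * Ca := by
  have h2 : (0:ℝ) < 2 ^ M := by positivity
  have hsum : |∑ k ∈ range (2 ^ M), h k * a k| ≤ 2 ^ M * (Ch * Ca) := by
    calc |∑ k ∈ range (2 ^ M), h k * a k| ≤ ∑ k ∈ range (2 ^ M), |h k * a k| :=
          Finset.abs_sum_le_sum_abs _ _
      _ ≤ ∑ _k ∈ range (2 ^ M), Ch * Ca := by
          refine Finset.sum_le_sum fun k _ => ?_
          rw [abs_mul]
          exact mul_le_mul (hh k) (ha k) (abs_nonneg _) ((abs_nonneg _).trans (hh k))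
      _ = 2 ^ M * (Ch * Ca) := by simp [mul_comm]
  rw [avg, abs_mul, abs_inv, abs_of_pos h2]
  rw [inv_mul_le_iff₀ h2]
  exact hsum

lemma sum_sq_H (c : ℕ → ℝ) {m M : ℕ} (hm : m ≤ M) :
    ∑ k ∈ range (2 ^ M), (∑ n ∈ range m, c n * sgn n k) ^ 2
      = 2 ^ M * ∑ n ∈ range m, (c n) ^ 2 := by
  have hexp : ∀ k, (∑ n ∈ range m, c n * sgn n k) ^ 2
      = ∑ n ∈ range m, ∑ n' ∈ range m, (c n * c n') * (sgn n k * sgn n' k) := by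
    intro k
    rw [sq, Finset.sum_mul_sum]
    refine Finset.sum_congr rfl fun n _ => Finset.sum_congr rfl fun n' _ => by ring
  simp_rw [hexp]
  rw [Finset.sum_comm]
  have hinner : ∀ n ∈ range m,
      ∑ k ∈ range (2 ^ M), ∑ n' ∈ range m, (c n * c n') * (sgn n k * sgn n' k)
        = 2 ^ M * (c n) ^ 2 := by
    intro n hn
    have hnM : n < M := lt_of_lt_of_le (mem_range.mp hn) hm
    rw [Finset.sum_comm]
    have : ∀ n' ∈ range m,
        ∑ k ∈ range (2 ^ M), (c n * c n') * (sgn n k * sgn n' k)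
          = if n' = n then 2 ^ M * (c n) ^ 2 else 0 := by
      intro n' _
      rw [← Finset.mul_sum]
      by_cases hne : n' = n
      · subst hne
        simp only [if_true]
        have : ∑ k ∈ range (2 ^ M), sgn n' k * sgn n' k = ∑ _k ∈ range (2 ^ M), (1:ℝ) :=
          Finset.sum_congr rfl fun k _ => sgn_sq n' k
        rw [this]
        simp [sq, mul_comm]
      · rw [if_neg hne, sgn_orth hnM (fun h => hne h.symm), mul_zero]
    rw [Finset.sum_congr rfl this, Finset.sum_ite_eq' (range m) n fun _ => 2 ^ M * (c n) ^ 2,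
      if_pos hn]
  rw [Finset.sum_congr rfl hinner, ← Finset.mul_sum]

end DP17

namespace DP17

abbrev X := lp (fun _ : ℕ => ℝ) ⊤

lemma coord_abs_le (a : X) (k : ℕ) : |a k| ≤ ‖a‖ := by
  simpa [Real.norm_eq_abs] using lp.norm_apply_le_norm (E := fun _ : ℕ => ℝ)
    ENNReal.top_ne_zero a k

lemma avg_bound {h : ℕ → ℝ} (hh : ∀ k, |h k| ≤ 1) (a : X) (M : ℕ) :
    |avg h (⇑a) M| ≤ ‖a‖ := by
  simpa using abs_avg_le hh (coord_abs_le a) M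

lemma tendsto_avg {h : ℕ → ℝ} (hh : ∀ k, |h k| ≤ 1) (a : X) :
    Tendsto (avg h ⇑a) (U : Filter ℕ) (𝓝 (limU (avg h ⇑a))) :=
  tendsto_limU (avg_bound hh a)

def radL (n : ℕ) : X →L[ℝ] ℝ :=
  LinearMap.mkContinuous
    { toFun := fun a => limU (avg (sgn n) ⇑a)
      map_add' := fun a b => by
        have hs : ∀ k, |sgn n k| ≤ 1 := fun k => (abs_sgn n k).le
        have hab : avg (sgn n) ⇑(a + b) = fun M => avg (sgn n) ⇑a M + avg (sgn n) ⇑b M := by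
          funext M
          simp only [avg, lp.coeFn_add, Pi.add_apply, mul_add, Finset.sum_add_distrib]
        have ht : Tendsto (avg (sgn n) ⇑(a + b)) (U : Filter ℕ)
            (𝓝 (limU (avg (sgn n) ⇑a) + limU (avg (sgn n) ⇑b))) := by
          rw [hab]
          exact (tendsto_avg hs a).add (tendsto_avg hs b)
        exact ht.limUnder_eq
      map_smul' := fun r a => by
        have hs : ∀ k, |sgn n k| ≤ 1 := fun k => (abs_sgn n k).le
        have hab : avg (sgn n) ⇑(r • a) = fun M => r * avg (sgn n) ⇑a M := by
          funext M
          simp only [avg, lp.coeFn_smul, Pi.smul_apply, smul_eq_mul, Finset.mul_sum]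
          exact Finset.sum_congr rfl fun k _ => by ring
        have ht : Tendsto (avg (sgn n) ⇑(r • a)) (U : Filter ℕ)
            (𝓝 (r * limU (avg (sgn n) ⇑a))) := by
          rw [hab]
          exact (tendsto_avg hs a).const_mul r
        simpa [limU] using ht.limUnder_eq }
    1 fun a => by
      have hs : ∀ k, |sgn n k| ≤ 1 := fun k => (abs_sgn n k).le
      simp only [LinearMap.coe_mk, AddHom.coe_mk, Real.norm_eq_abs, one_mul]
      exact abs_limU_le (avg_bound hs a) (Filter.Eventually.of_forall (avg_bound hs a))

lemma radL_apply (n : ℕ) (a : X) : radL n a = limU (avg (sgn n) ⇑a) := rfl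

end DP17

namespace DP17

lemma abs_H_le (c : ℕ → ℝ) (m k : ℕ) :
    |∑ n ∈ range m, c n * sgn n k| ≤ ∑ n ∈ range m, |c n| := by
  calc |∑ n ∈ range m, c n * sgn n k| ≤ ∑ n ∈ range m, |c n * sgn n k| :=
        Finset.abs_sum_le_sum_abs _ _
    _ = ∑ n ∈ range m, |c n| := Finset.sum_congr rfl fun n _ => by
        rw [abs_mul, abs_sgn, mul_one]

lemma sum_radL (c : ℕ → ℝ) (m : ℕ) (a : X) :
    ∑ n ∈ range m, c n * radL n a
      = limU (avg (fun k => ∑ n ∈ range m, c n * sgn n k) ⇑a) := by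
  have hpt : avg (fun k => ∑ n ∈ range m, c n * sgn n k) ⇑a
      = fun M => ∑ n ∈ range m, c n * avg (sgn n) ⇑a M := by
    funext M
    simp only [avg, Finset.sum_mul, Finset.mul_sum]
    rw [Finset.sum_comm]
    exact Finset.sum_congr rfl fun n _ => Finset.sum_congr rfl fun k _ => by ring
  have ht : Tendsto (avg (fun k => ∑ n ∈ range m, c n * sgn n k) ⇑a) (U : Filter ℕ)
      (𝓝 (∑ n ∈ range m, c n * radL n a)) := by
    rw [hpt]
    exact tendsto_finset_sum _ fun n _ =>
      (tendsto_avg (fun k => (abs_sgn n k).le) a).const_mul (c n)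
  exact ht.limUnder_eq.symm

lemma avg_H_bound (c : ℕ → ℝ) {m : ℕ} (a : X) {M : ℕ} (hm : m ≤ M) :
    |avg (fun k => ∑ n ∈ range m, c n * sgn n k) ⇑a M|
      ≤ Real.sqrt (∑ n ∈ range m, (c n) ^ 2) * ‖a‖ := by
  set H : ℕ → ℝ := fun k => ∑ n ∈ range m, c n * sgn n k with hH
  have h2 : (0:ℝ) < 2 ^ M := by positivity
  have hCS : (∑ k ∈ range (2 ^ M), |H k| * 1) ^ 2
      ≤ (∑ k ∈ range (2 ^ M), |H k| ^ 2) * ∑ k ∈ range (2 ^ M), (1:ℝ) ^ 2 :=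
    Finset.sum_mul_sq_le_sq_mul_sq _ _ _
  have hHsq : ∑ k ∈ range (2 ^ M), |H k| ^ 2 = 2 ^ M * ∑ n ∈ range m, (c n) ^ 2 := by
    rw [← sum_sq_H c hm]
    exact Finset.sum_congr rfl fun k _ => sq_abs _
  have hone : ∑ k ∈ range (2 ^ M), (1:ℝ) ^ 2 = 2 ^ M := by simp
  have hsumH : ∑ k ∈ range (2 ^ M), |H k|
      ≤ 2 ^ M * Real.sqrt (∑ n ∈ range m, (c n) ^ 2) := by
    have hcnn : 0 ≤ ∑ n ∈ range m, (c n) ^ 2 :=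
      Finset.sum_nonneg fun n _ => sq_nonneg _
    have hs : Real.sqrt (∑ n ∈ range m, (c n) ^ 2) ^ 2 = ∑ n ∈ range m, (c n) ^ 2 :=
      Real.sq_sqrt hcnn
    have h1 : (∑ k ∈ range (2 ^ M), |H k|) ^ 2
        ≤ (2 ^ M * Real.sqrt (∑ n ∈ range m, (c n) ^ 2)) ^ 2 := by
      have h0 : (∑ k ∈ range (2 ^ M), |H k|) ^ 2
          ≤ (2 ^ M * ∑ n ∈ range m, (c n) ^ 2) * 2 ^ M := by
        have h0' := hCS
        simp only [mul_one, hone] at h0'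
        rwa [hHsq] at h0'
      calc (∑ k ∈ range (2 ^ M), |H k|) ^ 2
          ≤ (2 ^ M * ∑ n ∈ range m, (c n) ^ 2) * 2 ^ M := h0
        _ = (2 ^ M * Real.sqrt (∑ n ∈ range m, (c n) ^ 2)) ^ 2 := by
            rw [mul_pow, hs]; ring
    have hnn : 0 ≤ ∑ k ∈ range (2 ^ M), |H k| :=
      Finset.sum_nonneg fun k _ => abs_nonneg _
    have h3 := Real.sqrt_le_sqrt h1
    rwa [Real.sqrt_sq hnn, Real.sqrt_sq (by positivity)] at h3
  have hterm : |∑ k ∈ range (2 ^ M), H k * a k|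
      ≤ ∑ k ∈ range (2 ^ M), |H k| * ‖a‖ := by
    calc |∑ k ∈ range (2 ^ M), H k * a k| ≤ ∑ k ∈ range (2 ^ M), |H k * a k| :=
          Finset.abs_sum_le_sum_abs _ _
      _ ≤ ∑ k ∈ range (2 ^ M), |H k| * ‖a‖ := Finset.sum_le_sum fun k _ => by
          rw [abs_mul]
          exact mul_le_mul_of_nonneg_left (coord_abs_le a k) (abs_nonneg _)
  rw [avg, abs_mul, abs_inv, abs_of_pos h2, inv_mul_le_iff₀ h2]
  calc |∑ k ∈ range (2 ^ M), H k * a k|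
      ≤ (∑ k ∈ range (2 ^ M), |H k|) * ‖a‖ := by
        rw [← Finset.sum_mul] at hterm
        exact hterm
    _ ≤ (2 ^ M * Real.sqrt (∑ n ∈ range m, (c n) ^ 2)) * ‖a‖ :=
        mul_le_mul_of_nonneg_right hsumH (norm_nonneg _)
    _ = 2 ^ M * (Real.sqrt (∑ n ∈ range m, (c n) ^ 2) * ‖a‖) := by ring

lemma norm_sum_radL (c : ℕ → ℝ) (m : ℕ) :
    ‖∑ n ∈ range m, c n • radL n‖ ≤ Real.sqrt (∑ n ∈ range m, (c n) ^ 2) := by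
  refine ContinuousLinearMap.opNorm_le_bound _ (Real.sqrt_nonneg _) fun a => ?_
  have happ : (∑ n ∈ range m, c n • radL n) a = ∑ n ∈ range m, c n * radL n a := by
    simp [ContinuousLinearMap.sum_apply]
  rw [happ, sum_radL, Real.norm_eq_abs]
  have hglob : ∀ M, |avg (fun k => ∑ n ∈ range m, c n * sgn n k) ⇑a M|
      ≤ (∑ n ∈ range m, |c n|) * ‖a‖ :=
    fun M => abs_avg_le (abs_H_le c m) (coord_abs_le a) M
  refine abs_limU_le hglob ?_
  filter_upwards [eventually_ge_atTop m] with M hM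
  exact avg_H_bound c a hM

end DP17

namespace DP17

lemma radL_weakly_null (Φ : (X →L[ℝ] ℝ) →L[ℝ] ℝ) :
    Tendsto (fun n => Φ (radL n)) atTop (𝓝 0) := by
  set t : ℕ → ℝ := fun n => Φ (radL n) with ht
  have hsum : ∀ m, ∑ n ∈ range m, (t n) ^ 2 ≤ ‖Φ‖ ^ 2 := by
    intro m
    set S := ∑ n ∈ range m, (t n) ^ 2 with hS
    have hS0 : 0 ≤ S := Finset.sum_nonneg fun n _ => sq_nonneg _
    have h1 : S = Φ (∑ n ∈ range m, t n • radL n) := by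
      rw [map_sum]
      exact Finset.sum_congr rfl fun n _ => by
        rw [map_smul, smul_eq_mul, sq]
    have h2 : S ≤ ‖Φ‖ * Real.sqrt S := by
      calc S = Φ (∑ n ∈ range m, t n • radL n) := h1
        _ ≤ |Φ (∑ n ∈ range m, t n • radL n)| := le_abs_self _
        _ ≤ ‖Φ‖ * ‖∑ n ∈ range m, t n • radL n‖ := Φ.le_opNorm _
        _ ≤ ‖Φ‖ * Real.sqrt S :=
            mul_le_mul_of_nonneg_left (norm_sum_radL t m) (norm_nonneg Φ)
    nlinarith [sq_nonneg (‖Φ‖ - Real.sqrt S), Real.sq_sqrt hS0, Real.sqrt_nonneg S,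
      norm_nonneg Φ]
  have hsummable : Summable fun n => (t n) ^ 2 :=
    summable_of_sum_range_le (fun n => sq_nonneg _) hsum
  have h0 : Tendsto (fun n => (t n) ^ 2) atTop (𝓝 0) := hsummable.tendsto_atTop_zero
  have habs : Tendsto (fun n => |t n|) atTop (𝓝 0) := by
    have hc := (Real.continuous_sqrt.tendsto 0).comp h0
    simpa [Function.comp_def, Real.sqrt_sq_eq_abs] using hc
  exact squeeze_zero_norm (fun n => le_of_eq (Real.norm_eq_abs _)) habs

end DP17

end
end Aux

/-- The order interval `[-𝟙, 𝟙]` in `ℓ∞`, where `𝟙 = (1,1,1,…)`, is not a Dunford–Pettis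
subset of `ℓ∞`. -/
theorem stmt_17 :
    ¬ DPSet {a : lp (fun _ : ℕ => ℝ) ⊤ | ∀ n : ℕ, |a n| ≤ 1} := by
  intro hDP
  have hw : WeaklyNull DP17.radL := fun Φ => DP17.radL_weakly_null Φ
  have hev := hDP DP17.radL hw (1/2) (by norm_num)
  obtain ⟨N, hN⟩ := hev.exists
  have hmem : Memℓp (DP17.sgn N) ⊤ :=
    memℓp_infty ⟨1, by rintro x ⟨k, rfl⟩; simp [Real.norm_eq_abs, DP17.abs_sgn]⟩
  set aN : lp (fun _ : ℕ => ℝ) ⊤ := ⟨DP17.sgn N, hmem⟩ with haN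
  have hcoe : ∀ k, aN k = DP17.sgn N k := fun k => rfl
  have hA : aN ∈ {a : lp (fun _ : ℕ => ℝ) ⊤ | ∀ n : ℕ, |a n| ≤ 1} := by
    intro k
    rw [hcoe]
    exact (DP17.abs_sgn N k).le
  have h1 : DP17.radL N aN = 1 := by
    rw [DP17.radL_apply]
    have hconst : DP17.avg (DP17.sgn N) ⇑aN = fun _ => (1:ℝ) := by
      funext M
      have hterm : ∀ k ∈ Finset.range (2 ^ M), DP17.sgn N k * aN k = 1 := fun k _ => by
        rw [hcoe]
        exact DP17.sgn_sq N k
      rw [DP17.avg, Finset.sum_congr rfl hterm]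
      simp
    rw [hconst]
    exact tendsto_const_nhds.limUnder_eq
  have hfin := hN aN hA
  rw [h1] at hfin
  norm_num at hfin
end
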